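/- For every fixed integer s ≥ 1, there are (up to isomorphism) only finitely many 5-vertex-critical (P_5, K_{1,s}+P_1)-free graphs. -/

import Mathlib

open SimpleGraph

/-- `G` contains no induced subgraph isomorphic to `H`. -/
def HFree {W V : Type*} (H : SimpleGraph W) (G : SimpleGraph V) : Prop :=
  IsEmpty (H ↪g G)

/-- `G` is `k`-vertex-critical: `χ(G) = k` and deleting any vertex decreases
the chromatic number below `k`. -/
def IsKVertexCritical {V : Type*} (G : SimpleGraph V) (k : ℕ) : Prop :=
  G.chromaticNumber = k ∧ ∀ v : V, (G.induce {v}ᶜ).chromaticNumber < k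

/-- The star `K_{1,s}`: center `0`, leaves `1, …, s`. -/
def starGraph (s : ℕ) : SimpleGraph (Fin (s + 1)) :=
  SimpleGraph.fromRel (fun i _ => (i : ℕ) = 0)

/-- `K_{1,s} + P_1`: the disjoint union of the star `K_{1,s}`
(center `0`, leaves `1, …, s`) and the isolated vertex `s + 1`. -/
def starPlusP1 (s : ℕ) : SimpleGraph (Fin (s + 2)) :=
  SimpleGraph.fromRel (fun i j => (i : ℕ) = 0 ∧ (j : ℕ) ≠ 0 ∧ (j : ℕ) ≤ s)

/-- The complement of `K_3 + 2P_1`: vertices `0,1,2` pairwise nonadjacent,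
vertices `3,4` adjacent to everything else. -/
def coK3Plus2P1 : SimpleGraph (Fin 5) :=
  SimpleGraph.fromRel (fun i j => 3 ≤ (i : ℕ) ∨ 3 ≤ (j : ℕ))

/-!
Induction on `k`. Colour classes are independent, so `|V| ≤ k α(G)`; let `I` be a maximum
independent set, and assume `|I|` is large. A vertex with at least `s` neighbours in `I` and a
non-neighbour in `I` is the centre of an induced `K_{1,s} + P_1`, so every vertex is either
complete to `I` or has fewer than `s` neighbours there; the same argument shows that the set `F`
of vertices complete to `I` is complete to its complement.

If `F ≠ ∅`, then `G` is the join of `G[F]` and `G[Fᶜ]`, whence `G[Fᶜ]` is vertex-critical with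
smaller chromatic number; it contains `I`, so induction bounds `|I|`. If `F = ∅`, no
neighbourhood contains an independent `s`-set (some vertex of `I` misses the star entirely), so
degrees are at most `k (s - 1)`. A critical graph is connected, and a connected `P_5`-free graph
has diameter at most `3`, so `|V| ≤ (k (s - 1) + 1) ^ 3`.
-/

open scoped Finset

namespace SimpleGraph

variable {V : Type*} {G : SimpleGraph V}

section Coloring

theorem natCast_toNat_chromaticNumber [Finite V] (G : SimpleGraph V) :
    (G.chromaticNumber.toNat : ℕ∞) = G.chromaticNumber :=
  ENat.natCast_toNat <|
    chromaticNumber_ne_top_iff_exists.2 ⟨_, G.colorable_chromaticNumber_of_fintype⟩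

theorem colorable_iff_toNat_chromaticNumber_le [Finite V] {n : ℕ} :
    G.Colorable n ↔ G.chromaticNumber.toNat ≤ n := by
  rw [← chromaticNumber_le_iff_colorable, ← natCast_toNat_chromaticNumber, Nat.cast_le,
    ENat.toNat_natCast]

theorem Colorable.add_of_induce_compl (F : Set V) {a b : ℕ} (ha : (G.induce F).Colorable a)
    (hb : (G.induce Fᶜ).Colorable b) : G.Colorable (a + b) := by
  classical
  obtain ⟨CF⟩ := ha
  obtain ⟨CL⟩ := hb
  let C : G.Coloring (Fin a ⊕ Fin b) := Coloring.mk
    (fun v => if h : v ∈ F then .inl (CF ⟨v, h⟩) else .inr (CL ⟨v, h⟩)) <| by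
      intro u v huv
      by_cases hu : u ∈ F <;> by_cases hv : v ∈ F <;> simp only [hu, hv, dite_true, dite_false,
        ne_eq, reduceCtorEq, not_false_eq_true, Sum.inl.injEq, Sum.inr.injEq]
      · exact CF.valid (show (G.induce F).Adj ⟨u, hu⟩ ⟨v, hv⟩ from huv)
      · exact CL.valid (show (G.induce Fᶜ).Adj ⟨u, hu⟩ ⟨v, hv⟩ from huv)
  simpa using C.colorable

/-- Two vertex sets that are completely joined to each other use disjoint sets of colours. -/
theorem Colorable.exists_add_le_of_forall_adj {S A B : Set V} {n : ℕ}
    (h : (G.induce S).Colorable n) (hA : A ⊆ S) (hB : B ⊆ S)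
    (hAB : ∀ x ∈ A, ∀ y ∈ B, G.Adj x y) :
    ∃ p q, p + q ≤ n ∧ (G.induce A).Colorable p ∧ (G.induce B).Colorable q := by
  classical
  obtain ⟨C⟩ := h
  let c (T : Set V) (hT : T ⊆ S) (x : T) : Fin n := C ⟨x, hT x.2⟩
  let colors (T : Set V) (hT : T ⊆ S) : Finset (Fin n) := {i | ∃ x, c T hT x = i}
  have restrict (T : Set V) (hT : T ⊆ S) : (G.induce T).Colorable #(colors T hT) := by
    have C' : (G.induce T).Coloring (colors T hT) :=
      Coloring.mk (fun x => ⟨c T hT x, Finset.mem_filter.2 ⟨Finset.mem_univ _, x, rfl⟩⟩)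
        fun {x y} hxy heq => C.valid (show (G.induce S).Adj ⟨x, hT x.2⟩ ⟨y, hT y.2⟩ from hxy)
          (congrArg Subtype.val heq)
    simpa using C'.colorable
  have hdisj : Disjoint (colors A hA) (colors B hB) := by
    simp only [colors, Finset.disjoint_left, Finset.mem_filter, Finset.mem_univ, true_and]
    rintro _ ⟨x, rfl⟩ ⟨y, hxy⟩
    exact C.valid (show (G.induce S).Adj ⟨x, hA x.2⟩ ⟨y, hB y.2⟩ from hAB x x.2 y y.2) hxy.symm
  refine ⟨_, _, ?_, restrict A hA, restrict B hB⟩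
  rw [← Finset.card_union_of_disjoint hdisj]
  simpa using Finset.card_le_univ (colors A hA ∪ colors B hB)

theorem Colorable.card_le_mul {n a : ℕ} (h : G.Colorable n) (t : Finset V)
    (ht : ∀ J ⊆ t, G.IsIndepSet (J : Set V) → #J ≤ a) : #t ≤ n * a := by
  classical
  obtain ⟨C⟩ := h
  calc #t = ∑ i : Fin n, #{x ∈ t | C x = i} :=
        Finset.card_eq_sum_card_fiberwise fun x _ => Finset.mem_univ (C x)
    _ ≤ ∑ _i : Fin n, a := by
        gcongr with i
        refine ht _ (Finset.filter_subset _ _) fun x hx y hy _ => ?_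
        simp only [Finset.coe_filter, Set.mem_ofPred_eq] at hx hy
        exact C.not_adj_of_mem_colorClass hx.2 hy.2
    _ = n * a := by simp

end Coloring

section Distance

theorem Walk.sub_le_dist_getVert {u v : V} {p : G.Walk u v} (hp : p.length = G.dist u v)
    {i j : ℕ} (hij : i ≤ j) (hj : j ≤ p.length) :
    j - i ≤ G.dist (p.getVert i) (p.getVert j) := by
  obtain ⟨q, hq⟩ := ((p.take i).reverse.append (p.take j)).reachable.exists_walk_length_eq_dist
  have := G.dist_le ((p.take i).append (q.append (p.drop j)))
  simp only [Walk.length_append, Walk.take_length, Walk.drop_length, hq] at this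
  omega

/-- The first `n + 2` vertices of a shortest walk of length `> n` induce a path. -/
theorem dist_le_of_hFree_pathGraph {n : ℕ} (h : HFree (pathGraph (n + 2)) G) {u v : V}
    (huv : G.Reachable u v) : G.dist u v ≤ n := by
  by_contra! hn
  obtain ⟨p, hp⟩ := huv.exists_walk_length_eq_dist
  have key {i j : Fin (n + 2)} (hij : i < j) :
      (j : ℕ) - i ≤ G.dist (p.getVert i) (p.getVert j) :=
    p.sub_le_dist_getVert hp hij.le (by omega)
  refine h.false ⟨⟨fun i => p.getVert i, fun i j hij => ?_⟩, fun {i j} => ?_⟩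
  · by_contra hne
    rcases lt_or_gt_of_ne hne with hlt | hlt
    · have := key hlt
      simp only [hij, dist_self] at this
      omega
    · have := key hlt
      simp only [hij, dist_self] at this
      omega
  · change G.Adj (p.getVert i) (p.getVert j) ↔ _
    rw [pathGraph_adj]
    refine ⟨fun hadj => ?_, ?_⟩
    · rcases lt_or_gt_of_ne (fun hij : i = j => G.irrefl (hij ▸ hadj)) with hlt | hlt
      · have := key hlt
        rw [dist_eq_one_iff_adj.2 hadj] at this
        omega
      · have := key hlt
        rw [dist_eq_one_iff_adj.2 hadj.symm] at this
        omega
    · rintro (hij | hij)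
      · simpa [← hij] using p.adj_getVert_succ (i := i) (by omega)
      · simpa [← hij] using (p.adj_getVert_succ (i := j) (by omega)).symm

theorem card_le_pow_of_forall_walk_length_le [Fintype V] [DecidableRel G.Adj] {D : ℕ}
    (hdeg : ∀ v, G.degree v ≤ D) (u : V) {r : ℕ} (hr : ∀ x, ∃ p : G.Walk x u, p.length ≤ r) :
    Fintype.card V ≤ (D + 1) ^ r := by
  classical
  have ball (r : ℕ) : #{x | ∃ p : G.Walk x u, p.length ≤ r} ≤ (D + 1) ^ r := by
    induction r with
    | zero =>
      refine Finset.card_le_one.2 fun x hx y hy => ?_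
      simp only [Finset.mem_filter, Finset.mem_univ, true_and, Nat.le_zero] at hx hy
      obtain ⟨p, hp⟩ := hx
      obtain ⟨q, hq⟩ := hy
      exact (Walk.eq_of_length_eq_zero hp).trans (Walk.eq_of_length_eq_zero hq).symm
    | succ r ih =>
      set B : Finset V := {x | ∃ p : G.Walk x u, p.length ≤ r}
      have hsub : ({x | ∃ p : G.Walk x u, p.length ≤ r + 1} : Finset V) ⊆
          B ∪ B.biUnion (G.neighborFinset ·) := by
        intro x hx
        simp only [Finset.mem_filter, Finset.mem_univ, true_and] at hx
        obtain ⟨p, hp⟩ := hx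
        cases p with
        | nil => exact Finset.mem_union_left _ (by simpa [B] using ⟨.nil, Nat.zero_le r⟩)
        | @cons _ y _ hxy q =>
          refine Finset.mem_union_right _ (Finset.mem_biUnion.2 ⟨y, ?_, ?_⟩)
          · simpa [B] using ⟨q, Nat.le_of_succ_le_succ hp⟩
          · exact (G.mem_neighborFinset y x).2 hxy.symm
      calc _ ≤ #(B ∪ B.biUnion (G.neighborFinset ·)) := Finset.card_le_card hsub
        _ ≤ #B + ∑ y ∈ B, #(G.neighborFinset y) := by
          grw [Finset.card_union_le, Finset.card_biUnion_le]
        _ ≤ #B + ∑ _y ∈ B, D := by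
          gcongr with y
          exact (G.card_neighborFinset_eq_degree y).trans_le (hdeg y)
        _ = #B * (D + 1) := by rw [Finset.sum_const, smul_eq_mul]; ring
        _ ≤ (D + 1) ^ (r + 1) := by rw [pow_succ]; gcongr
  calc Fintype.card V = #{x | ∃ p : G.Walk x u, p.length ≤ r} := by
        rw [Finset.filter_true_of_mem fun x _ => hr x, Finset.card_univ]
    _ ≤ (D + 1) ^ r := ball r

end Distance

end SimpleGraph

section Critical

variable {V : Type*} {G : SimpleGraph V} {k : ℕ}

theorem isKVertexCritical_iff_toNat [Finite V] : IsKVertexCritical G k ↔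
    G.chromaticNumber.toNat = k ∧ ∀ v, (G.induce {v}ᶜ).chromaticNumber.toNat < k := by
  refine and_congr ?_ (forall_congr' fun v => ?_)
  · rw [← natCast_toNat_chromaticNumber G, Nat.cast_inj, ENat.toNat_natCast]
  · rw [← natCast_toNat_chromaticNumber (G.induce {v}ᶜ), Nat.cast_lt, ENat.toNat_natCast]

theorem IsKVertexCritical.colorable (hG : IsKVertexCritical G k) : G.Colorable k :=
  chromaticNumber_le_iff_colorable.1 hG.1.le

theorem IsKVertexCritical.preconnected [Finite V] (hG : IsKVertexCritical G k) :
    G.Preconnected := by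
  rw [isKVertexCritical_iff_toNat] at hG
  by_contra hG'
  obtain ⟨x, y, hxy⟩ : ∃ x y, ¬ G.Reachable x y := by simpa [Preconnected] using hG'
  -- each component misses a vertex `v`, so it is coloured inside `G - v`
  have hcol : G.Colorable (k - 1) := by
    refine colorable_iff_forall_connectedComponent.2 fun c => ?_
    obtain ⟨v, hv⟩ : ∃ v, v ∉ c.supp := by
      by_cases hx : x ∈ c.supp
      · refine ⟨y, fun hy => hxy ?_⟩
        rw [ConnectedComponent.mem_supp_iff] at hx hy
        exact ConnectedComponent.exact (hx.trans hy.symm)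
      · exact ⟨x, hx⟩
    have hle : c.supp ≤ {v}ᶜ := fun w hw hwv => hv (hwv ▸ hw)
    exact (colorable_iff_toNat_chromaticNumber_le.2 (by have := hG.2 v; omega)).of_hom
      (G.induceHomOfLE hle).toHom
  have hk := hG.1 ▸ colorable_iff_toNat_chromaticNumber_le.1 hcol
  exact (colorable_zero_iff.1 (hcol.mono (by omega))).false x

/-- The chromatic number is additive over the join of `G[F]` and `G[Fᶜ]`, so deleting a vertex
of `Fᶜ` lowers `χ(G[Fᶜ])`. -/
theorem IsKVertexCritical.exists_induce_compl [Finite V] {F : Set V}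
    (hG : IsKVertexCritical G k) (hF : F.Nonempty) (hFc : ∀ x ∈ F, ∀ y ∈ Fᶜ, G.Adj x y) :
    ∃ j < k, IsKVertexCritical (G.induce Fᶜ) j := by
  rw [isKVertexCritical_iff_toNat] at hG
  set a := (G.induce F).chromaticNumber.toNat
  set b := (G.induce Fᶜ).chromaticNumber.toNat
  have ha : 1 ≤ a := by
    by_contra! h
    have h0 : (G.induce F).Colorable 0 := colorable_iff_toNat_chromaticNumber_le.2 (by omega)
    exact (colorable_zero_iff.1 h0).false ⟨_, hF.some_mem⟩
  have hk : k ≤ a + b := hG.1 ▸ colorable_iff_toNat_chromaticNumber_le.1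
    ((colorable_chromaticNumber_of_fintype _).add_of_induce_compl F
      (colorable_chromaticNumber_of_fintype _))
  have hab : a + b ≤ k := by
    obtain ⟨p, q, hpq, hp, hq⟩ :=
      (G.colorable_chromaticNumber_of_fintype.of_hom (Embedding.induce Set.univ).toHom
        ).exists_add_le_of_forall_adj (Set.subset_univ F) (Set.subset_univ Fᶜ) hFc
    have := colorable_iff_toNat_chromaticNumber_le.1 hp
    have := colorable_iff_toNat_chromaticNumber_le.1 hq
    omega
  refine ⟨b, by omega, isKVertexCritical_iff_toNat.2 ⟨rfl, fun v => ?_⟩⟩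
  obtain ⟨p, q, hpq, hp, hq⟩ :=
    (colorable_chromaticNumber_of_fintype (G.induce {v.1}ᶜ)).exists_add_le_of_forall_adj
      (A := F) (B := Fᶜ ∩ {v.1}ᶜ) (fun x hx hxv => v.2 (hxv ▸ hx)) Set.inter_subset_right
      fun x hx y hy => hFc x hx y hy.1
  have hq' : ((G.induce Fᶜ).induce {v}ᶜ).Colorable q :=
    hq.of_hom ⟨fun x => ⟨x.1.1, x.1.2, fun h => x.2 (Subtype.ext h)⟩, fun h => h⟩
  have := colorable_iff_toNat_chromaticNumber_le.1 hp
  have := colorable_iff_toNat_chromaticNumber_le.1 hq'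
  have := hG.2 v
  omega

end Critical

theorem HFree.of_embedding {V W X : Type*} {H : SimpleGraph X} {G : SimpleGraph V}
    {G' : SimpleGraph W} (e : G ↪g G') (h : HFree H G') : HFree H G :=
  ⟨fun f => h.false (e.comp f)⟩

section Star

variable {V : Type*} {G : SimpleGraph V}

theorem nonempty_starPlusP1_embedding {s : ℕ} {c p : V} {w : Fin s → V}
    (hw : Function.Injective w) (hc : ∀ i, G.Adj c (w i))
    (hind : ∀ i j, ¬ G.Adj (w i) (w j)) (hpc : c ≠ p ∧ ¬ G.Adj c p)
    (hpw : ∀ i, w i ≠ p ∧ ¬ G.Adj (w i) p) :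
    Nonempty (starPlusP1 s ↪g G) := by
  let f : Fin (s + 2) → V := Fin.cons c (Fin.snoc (α := fun _ => V) w p)
  have trichotomy (x : Fin (s + 2)) :
      x = 0 ∨ x = (Fin.last s).succ ∨ ∃ i : Fin s, x = i.castSucc.succ := by
    induction x using Fin.cases with
    | zero => exact .inl rfl
    | succ x => induction x using Fin.lastCases <;> simp
  have hinj : Function.Injective f := by
    refine Fin.cons_injective_iff.2
      ⟨?_, Fin.snoc_injective_iff.2 ⟨hw, fun ⟨i, hi⟩ => (hpw i).1 hi⟩⟩
    rw [Fin.range_snoc]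
    rintro (hcp | ⟨i, hi⟩)
    exacts [hpc.1 hcp, (hc i).ne hi.symm]
  refine ⟨⟨⟨f, hinj⟩, fun {x y} => ?_⟩⟩
  change G.Adj (f x) (f y) ↔ _
  rw [starPlusP1, fromRel_adj]
  rcases trichotomy x with rfl | rfl | ⟨i, rfl⟩ <;>
    rcases trichotomy y with rfl | rfl | ⟨j, rfl⟩ <;>
    simp [f, hc, hind, hpc.2, (hpw _).2, (hc _).symm, G.adj_comm p, (Fin.succ_ne_zero _).symm]

theorem HFree.exists_eq_or_adj_of_starPlusP1 {s : ℕ} (h : HFree (starPlusP1 s) G)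
    {c : V} {W : Finset V} (hW : #W = s) (hcW : ∀ w ∈ W, G.Adj c w)
    (hWind : G.IsIndepSet (W : Set V)) (p : V) :
    c = p ∨ G.Adj c p ∨ ∃ w ∈ W, w = p ∨ G.Adj w p := by
  by_contra! ⟨hcp, hcp', hWp⟩
  let e := (W.equivFinOfCardEq hW).symm
  refine h.false (nonempty_starPlusP1_embedding (w := fun i => (e i : V))
    (Subtype.val_injective.comp e.injective) (fun i => hcW _ (e i).2) (fun i j hij => ?_)
    ⟨hcp, hcp'⟩ fun i => hWp _ (e i).2).some
  exact hWind (e i).2 (e j).2 hij.ne hij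

end Star

section IndepSet

variable {V : Type*} {G : SimpleGraph V} [DecidableRel G.Adj] {s : ℕ} {I : Finset V}

theorem card_filter_eq_or_adj_le [DecidableEq V] (I : Finset V) (v : V) :
    #{u ∈ I | v = u ∨ G.Adj v u} ≤ #{u ∈ I | G.Adj v u} + 1 := by
  calc #{u ∈ I | v = u ∨ G.Adj v u} ≤ #{u ∈ I | v = u} + #{u ∈ I | G.Adj v u} := by
        rw [Finset.filter_or]
        exact Finset.card_union_le _ _
    _ ≤ #{u ∈ I | G.Adj v u} + 1 := by
        rw [add_comm]
        gcongr
        exact Finset.card_le_one.2 fun a ha b hb => by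
          simp only [Finset.mem_filter] at ha hb
          exact ha.2.symm.trans hb.2

theorem HFree.forall_adj_or_card_filter_adj_lt (hS : HFree (starPlusP1 s) G) (hs : 1 ≤ s)
    (hI : G.IsIndepSet (I : Set V)) (v : V) :
    (∀ u ∈ I, G.Adj v u) ∨ #{u ∈ I | G.Adj v u} < s := by
  by_contra! ⟨⟨u, huI, hvu⟩, hsle⟩
  obtain ⟨W, hWsub, hW⟩ := Finset.exists_subset_card_eq hsle
  have hWI (w) (hw : w ∈ W) : w ∈ I ∧ G.Adj v w := Finset.mem_filter.1 (hWsub hw)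
  rcases hS.exists_eq_or_adj_of_starPlusP1 hW (fun w hw => (hWI w hw).2)
    (hI.mono fun w hw => (hWI w hw).1) u with rfl | hadj | ⟨w, hw, rfl | hadj⟩
  · obtain ⟨w, hw⟩ := Finset.card_pos.1 (hW ▸ hs)
    exact hI huI (hWI w hw).1 (hWI w hw).2.ne (hWI w hw).2
  · exact hvu hadj
  · exact hvu (hWI _ hw).2
  · exact hI (hWI w hw).1 huI hadj.ne hadj

theorem HFree.adj_of_forall_adj_of_card_filter_adj_lt [DecidableEq V]
    (hS : HFree (starPlusP1 s) G) (hI : G.IsIndepSet (I : Set V)) (hIs : 2 * s ≤ #I) {x y : V}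
    (hx : ∀ u ∈ I, G.Adj x u) (hy : #{u ∈ I | G.Adj y u} < s) : G.Adj x y := by
  by_contra hxy
  have hfar : s ≤ #{u ∈ I | ¬ (y = u ∨ G.Adj y u)} := by
    have := Finset.card_filter_add_card_filter_not (s := I) (fun u => y = u ∨ G.Adj y u)
    have := card_filter_eq_or_adj_le (G := G) I y
    omega
  obtain ⟨W, hWsub, hW⟩ := Finset.exists_subset_card_eq hfar
  have hWI (w) (hw : w ∈ W) := Finset.mem_filter.1 (hWsub hw)
  rcases hS.exists_eq_or_adj_of_starPlusP1 hW (fun w hw => hx w (hWI w hw).1)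
    (hI.mono fun w hw => (hWI w hw).1) y with rfl | hadj | ⟨w, hw, hwy⟩
  · rw [Finset.filter_true_of_mem hx] at hy
    omega
  · exact hxy hadj
  · exact (hWI w hw).2 (hwy.imp Eq.symm Adj.symm)

theorem HFree.card_lt_of_isIndepSet_of_forall_adj [DecidableEq V]
    (hS : HFree (starPlusP1 s) G) (hfew : ∀ v, #{u ∈ I | G.Adj v u} < s)
    (hIs : s * (s + 1) < #I) {v : V} {J : Finset V}
    (hJv : ∀ w ∈ J, G.Adj v w) (hJ : G.IsIndepSet (J : Set V)) : #J < s := by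
  by_contra! hsle
  obtain ⟨W, hWJ, hW⟩ := Finset.exists_subset_card_eq hsle
  let touched (a : V) : Finset V := {u ∈ I | a = u ∨ G.Adj a u}
  have htouched (a : V) : #(touched a) ≤ s := by
    change #{u ∈ I | a = u ∨ G.Adj a u} ≤ s
    have := card_filter_eq_or_adj_le (G := G) I a
    have := hfew a
    omega
  have hcard : #(touched v ∪ W.biUnion touched) ≤ s * (s + 1) :=
    calc #(touched v ∪ W.biUnion touched) ≤ #(touched v) + ∑ w ∈ W, #(touched w) := by
          grw [Finset.card_union_le, Finset.card_biUnion_le]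
      _ ≤ s + ∑ _w ∈ W, s := by gcongr <;> apply htouched
      _ = s * (s + 1) := by rw [Finset.sum_const, hW, smul_eq_mul]; ring
  obtain ⟨p, hpI, hp⟩ := Finset.exists_mem_notMem_of_card_lt_card (hcard.trans_lt hIs)
  rcases hS.exists_eq_or_adj_of_starPlusP1 hW (fun w hw => hJv w (hWJ hw)) (hJ.mono hWJ) p with
    hvp | hvp | ⟨w, hw, hwp⟩
  · exact hp (Finset.mem_union_left _ (Finset.mem_filter.2 ⟨hpI, .inl hvp⟩))
  · exact hp (Finset.mem_union_left _ (Finset.mem_filter.2 ⟨hpI, .inr hvp⟩))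
  · exact hp (Finset.mem_union_right _
      (Finset.mem_biUnion.2 ⟨w, hw, Finset.mem_filter.2 ⟨hpI, hwp⟩⟩))

end IndepSet

section Main

variable {s k : ℕ} {V : Type} [Fintype V] {G : SimpleGraph V}

theorem IsKVertexCritical.card_le_of_forall_card_filter_adj_lt [DecidableRel G.Adj]
    {I : Finset V} (hG : IsKVertexCritical G k) (hP : HFree (pathGraph 5) G)
    (hS : HFree (starPlusP1 s) G) (hfew : ∀ v, #{u ∈ I | G.Adj v u} < s)
    (hIs : s * (s + 1) < #I) : Fintype.card V ≤ (k * (s - 1) + 1) ^ 3 := by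
  classical
  have hdeg (v : V) : G.degree v ≤ k * (s - 1) := by
    rw [← card_neighborFinset_eq_degree]
    refine hG.colorable.card_le_mul _ fun J hJ hJind => Nat.le_sub_one_of_lt ?_
    exact hS.card_lt_of_isIndepSet_of_forall_adj hfew hIs
      (fun w hw => (mem_neighborFinset _ _ _).1 (hJ hw)) hJind
  obtain ⟨u, -⟩ := Finset.card_pos.1 (by omega : 0 < #I)
  refine card_le_pow_of_forall_walk_length_le hdeg u fun x => ?_
  obtain ⟨p, hp⟩ := (hG.preconnected x u).exists_walk_length_eq_dist
  exact ⟨p, hp ▸ dist_le_of_hFree_pathGraph hP (hG.preconnected x u)⟩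

theorem IsKVertexCritical.card_le_of_forall_adj {M : ℕ} (hs : 1 ≤ s)
    (hM : ∀ j < k, ∀ (W : Type) [Fintype W] (H : SimpleGraph W), IsKVertexCritical H j →
      HFree (pathGraph 5) H → HFree (starPlusP1 s) H → Fintype.card W ≤ M)
    (hG : IsKVertexCritical G k) (hP : HFree (pathGraph 5) G) (hS : HFree (starPlusP1 s) G)
    {I : Finset V} (hI : G.IsIndepSet (I : Set V)) (hIs : 2 * s ≤ #I) {x : V}
    (hx : ∀ u ∈ I, G.Adj x u) : #I ≤ M := by
  classical
  let F : Set V := {v | ∀ u ∈ I, G.Adj v u}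
  have hFc : ∀ v ∈ F, ∀ w ∈ Fᶜ, G.Adj v w := fun v hv w hw =>
    hS.adj_of_forall_adj_of_card_filter_adj_lt hI hIs hv
      ((hS.forall_adj_or_card_filter_adj_lt hs hI w).resolve_left hw)
  obtain ⟨j, hjk, hj⟩ := hG.exists_induce_compl (F := F) ⟨x, hx⟩ hFc
  have hIF : #I ≤ Fintype.card (Fᶜ : Set V) := by
    rw [Fintype.card_subtype]
    exact Finset.card_le_card fun u hu => Finset.mem_filter.2
      ⟨Finset.mem_univ u, fun huF => G.irrefl (huF u hu)⟩
  exact hIF.trans <| hM j hjk _ _ hj (hP.of_embedding (Embedding.induce _))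
    (hS.of_embedding (Embedding.induce _))

theorem IsKVertexCritical.card_le_of_forall_lt {M : ℕ} (hs : 1 ≤ s)
    (hM : ∀ j < k, ∀ (W : Type) [Fintype W] (H : SimpleGraph W), IsKVertexCritical H j →
      HFree (pathGraph 5) H → HFree (starPlusP1 s) H → Fintype.card W ≤ M)
    (hG : IsKVertexCritical G k) (hP : HFree (pathGraph 5) G) (hS : HFree (starPlusP1 s) G) :
    Fintype.card V ≤ max (k * max (s * (s + 1)) M) ((k * (s - 1) + 1) ^ 3) := by
  classical
  obtain ⟨I, hI, hImax⟩ := G.maximumIndepSet_exists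
  have hV : Fintype.card V ≤ k * #I := by
    simpa using hG.colorable.card_le_mul Finset.univ fun J _ hJ => hImax J hJ
  by_cases hIsmall : #I ≤ max (s * (s + 1)) M
  · exact le_max_of_le_left (hV.trans (Nat.mul_le_mul_left k hIsmall))
  obtain ⟨hIs, hIM⟩ := max_lt_iff.1 (not_le.1 hIsmall)
  by_cases hfull : ∃ x, ∀ u ∈ I, G.Adj x u
  · obtain ⟨x, hx⟩ := hfull
    have := hG.card_le_of_forall_adj hs hM hP hS hI (by nlinarith) hx
    omega
  · refine le_max_of_le_right (hG.card_le_of_forall_card_filter_adj_lt hP hS (fun v => ?_) hIs)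
    exact (hS.forall_adj_or_card_filter_adj_lt hs hI v).resolve_left fun h => hfull ⟨v, h⟩

end Main

theorem exists_card_le_of_isKVertexCritical {s : ℕ} (hs : 1 ≤ s) (k : ℕ) : ∃ N, ∀ j ≤ k,
    ∀ (V : Type) [Fintype V] (G : SimpleGraph V), IsKVertexCritical G j →
      HFree (pathGraph 5) G → HFree (starPlusP1 s) G → Fintype.card V ≤ N := by
  induction k with
  | zero =>
    refine ⟨1, fun j hj V _ G hG hP hS => ?_⟩
    obtain rfl := Nat.le_zero.1 hj
    simpa using hG.card_le_of_forall_lt (M := 0) hs (fun j hj => by omega) hP hS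
  | succ k ih =>
    obtain ⟨M, hM⟩ := ih
    refine ⟨max M (max ((k + 1) * max (s * (s + 1)) M) (((k + 1) * (s - 1) + 1) ^ 3)),
      fun j hj V _ G hG hP hS => ?_⟩
    rcases Nat.le_succ_iff.1 hj with hj | rfl
    · exact le_max_of_le_left (hM j hj V G hG hP hS)
    · exact le_max_of_le_right (hG.card_le_of_forall_lt hs (fun i hi => hM i (by omega)) hP hS)

theorem stmt16 (s : ℕ) (hs : 1 ≤ s) : ∃ N : ℕ,
    ∀ (V : Type) [Fintype V] (G : SimpleGraph V),
      IsKVertexCritical G 5 → HFree (pathGraph 5) G → HFree (starPlusP1 s) G →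
      Fintype.card V ≤ N := by
  obtain ⟨N, hN⟩ := exists_card_le_of_isKVertexCritical hs 5
  exact ⟨N, fun V _ G => hN 5 le_rfl V G⟩
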